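/- Assume x† ∈ ℓ² has finite support, satisfies the source condition K*w = x† + ηξ for some w ∈ H, η > 0 and ξ ∈ ∂‖·‖_{ℓ¹}(x†), and that K has the finite basis injectivity property. Then there exist positive constants c₁ and c₂ such that for all x ∈ ℓ¹ ∩ ℓ²: R_η(x) − R_η(x†) ≥ c₁‖x − x†‖_{ℓ²} − c₂‖K(x − x†)‖. -/

import Mathlib

noncomputable section

open Filter Topology

/-- `ℓ²(ℕ, ℝ)`. -/
abbrev ltwo : Type := lp (fun _ : ℕ => ℝ) 2

/-- `x ∈ ℓ¹`. -/
def inL1 (x : ltwo) : Prop := Memℓp (fun i => x i) 1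

/-- The `ℓ¹`-norm `‖x‖_{ℓ¹} = ∑ |xᵢ|` (junk value if `x ∉ ℓ¹`). -/
noncomputable def l1norm (x : ltwo) : ℝ := ∑' i, |x i|

/-- The functional `R_η(x) = η‖x‖₁ + ½‖x‖₂²` (finite on `ℓ¹ ∩ ℓ²`). -/
noncomputable def Rfun (η : ℝ) (x : ltwo) : ℝ := η * l1norm x + (1 / 2) * ‖x‖ ^ 2

/-- `x†` is the `R_η`-minimizing solution of `Kx = y†`: it solves the equation and
minimizes `R_η` among all solutions in `ℓ¹ ∩ ℓ²`. -/
def IsRMinSolution {H : Type*} [NormedAddCommGroup H] [InnerProductSpace ℝ H]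
    (K : ltwo →L[ℝ] H) (ydag : H) (η : ℝ) (xdag : ltwo) : Prop :=
  inL1 xdag ∧ K xdag = ydag ∧
    ∀ z : ltwo, inL1 z → K z = ydag → Rfun η xdag ≤ Rfun η z

/-- `K` has the finite basis injectivity property. -/
def FBI {H : Type*} [NormedAddCommGroup H] [InnerProductSpace ℝ H]
    (K : ltwo →L[ℝ] H) : Prop :=
  ∀ I : Finset ℕ, ∀ u v : ltwo, K u = K v →
    (∀ i ∉ I, u i = 0) → (∀ i ∉ I, v i = 0) → u = v

/-! Since `K*w ∈ ℓ²`, only finitely many `|ξᵢ|` with `x†ᵢ = 0` reach `1/2`; let `J` be the finite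
set of these indices together with the support of `x†`. Expanding the square and using the source
condition, `R_η(x) - R_η(x†) = η D_ξ(x, x†) + ⟨w, K(x - x†)⟩ + ½‖x - x†‖²`, where the Bregman
distance `D_ξ` of the `ℓ¹`-norm is a sum of nonnegative terms which, off `J`, dominate
`½|xᵢ - x†ᵢ|`. On the finite-dimensional space of sequences supported in `J`, FBI makes `K` bounded
below, so the part of `x - x†` on `J` is controlled by `‖K(x - x†)‖` and the part off `J`. -/
open scoped ENNReal

theorem lp.norm_le_tsum_norm {α : Type*} {E : α → Type*} [∀ i, NormedAddCommGroup (E i)]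
    {p : ℝ≥0∞} [Fact (1 ≤ p)] (hp : p ≠ ∞) (f : lp E p) (hf : Summable fun i => ‖f i‖) :
    ‖f‖ ≤ ∑' i, ‖f i‖ := by
  classical
  have hp₀ : 0 < p := zero_lt_one.trans_le Fact.out
  calc ‖f‖ = ‖∑' i, lp.single p i (f i)‖ := by rw [(lp.hasSum_single hp f).tsum_eq]
    _ ≤ ∑' i, ‖f i‖ := tsum_of_norm_bounded hf.hasSum fun i => (lp.norm_single hp₀ i (f i)).le

theorem lp.finite_setOf_le_norm {α : Type*} {E : α → Type*} [∀ i, NormedAddCommGroup (E i)]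
    {p : ℝ≥0∞} (hp : 0 < p.toReal) (f : lp E p) {ε : ℝ} (hε : 0 < ε) :
    {i | ε ≤ ‖f i‖}.Finite := by
  have hsmall : ∀ᶠ i in cofinite, ‖f i‖ ^ p.toReal < ε ^ p.toReal :=
    ((lp.memℓp f).summable hp).tendsto_cofinite_zero.eventually_lt_const (by positivity)
  refine (eventually_cofinite.mp hsmall).subset fun i hi => ?_
  simp only [Set.mem_ofPred_eq, not_lt] at hi ⊢
  gcongr

theorem exists_norm_le_mul_norm_of_injOn {𝕜 E F : Type*} [NontriviallyNormedField 𝕜]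
    [CompleteSpace 𝕜] [NormedAddCommGroup E] [NormedSpace 𝕜 E] [NormedAddCommGroup F]
    [NormedSpace 𝕜 F] (V : Submodule 𝕜 E) [FiniteDimensional 𝕜 V] (K : E →L[𝕜] F)
    (hK : Set.InjOn K V) : ∃ C : ℝ, 0 ≤ C ∧ ∀ u ∈ V, ‖u‖ ≤ C * ‖K u‖ := by
  have hinj : Function.Injective (K.toLinearMap.domRestrict V) :=
    fun a b hab => Subtype.ext (hK a.2 b.2 hab)
  obtain ⟨C, -, hC⟩ := (LinearMap.injective_iff_antilipschitz _).mp hinj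
  refine ⟨C, C.2, fun u hu => ?_⟩
  simpa using hC.le_mul_dist ⟨u, hu⟩ 0

theorem Real.abs_sub_abs_sub_mul_sub_nonneg {a b t : ℝ} (ht : |t| ≤ 1) (htb : t * b = |b|) :
    0 ≤ |a| - |b| - t * (a - b) := by
  have : t * a ≤ |a| :=
    (le_abs_self _).trans (by rw [abs_mul]; exact mul_le_of_le_one_left (abs_nonneg a) ht)
  linarith

theorem Real.mul_eq_abs_of_sign {b t : ℝ} (h : b ≠ 0 → t = Real.sign b) : t * b = |b| := by
  rcases lt_trichotomy b 0 with hb | rfl | hb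
  · rw [h hb.ne, Real.sign_of_neg hb, abs_of_neg hb]; ring
  · simp
  · rw [h hb.ne', Real.sign_of_pos hb, abs_of_pos hb]; ring

def supportedIn (J : Finset ℕ) : Submodule ℝ ltwo where
  carrier := {u | ∀ i ∉ J, u i = 0}
  add_mem' ha hb i hi := by simp [ha i hi, hb i hi]
  zero_mem' _ _ := rfl
  smul_mem' c _ ha i hi := by simp [ha i hi]

instance (J : Finset ℕ) : FiniteDimensional ℝ (supportedIn J) := by
  let coords : supportedIn J →ₗ[ℝ] (J → ℝ) :=
    (LinearMap.pi fun i : J => lp.evalₗ (𝕜 := ℝ) _ 2 (i : ℕ)).comp (supportedIn J).subtype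
  refine Module.Finite.of_injective coords fun u v huv =>
    Subtype.ext <| lp.ext <| funext fun i => ?_
  by_cases hi : i ∈ J
  · exact congrFun huv ⟨i, hi⟩
  · rw [u.2 i hi, v.2 i hi]

def truncate (J : Finset ℕ) (x : ltwo) : ltwo :=
  ⟨(J : Set ℕ).indicator x, (lp.memℓp x).mono' fun _ => norm_indicator_le_norm_self _ _⟩

theorem truncate_mem_supportedIn (J : Finset ℕ) (x : ltwo) : truncate J x ∈ supportedIn J :=
  fun _ hi => Set.indicator_of_notMem (by simpa using hi) _

theorem sub_truncate_apply (J : Finset ℕ) (x : ltwo) (i : ℕ) :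
    (x - truncate J x) i = (↑J : Set ℕ)ᶜ.indicator x i := by
  rw [Set.indicator_compl]; rfl

theorem FBI.exists_norm_le {H : Type*} [NormedAddCommGroup H] [InnerProductSpace ℝ H]
    {K : ltwo →L[ℝ] H} (hK : FBI K) (J : Finset ℕ) :
    ∃ C : ℝ, 0 ≤ C ∧ ∀ h : ltwo,
      ‖h‖ ≤ C * ‖K h‖ + (C * ‖K‖ + 1) * ‖h - truncate J h‖ := by
  obtain ⟨C, hC0, hC⟩ := exists_norm_le_mul_norm_of_injOn (supportedIn J) K
    fun u hu v hv huv => hK J u v huv hu hv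
  refine ⟨C, hC0, fun h => ?_⟩
  set u := truncate J h
  have hKu : ‖K u‖ ≤ ‖K h‖ + ‖K‖ * ‖h - u‖ := by
    calc ‖K u‖ = ‖K h - K (h - u)‖ := by rw [map_sub, sub_sub_cancel]
      _ ≤ ‖K h‖ + ‖K (h - u)‖ := norm_sub_le _ _
      _ ≤ ‖K h‖ + ‖K‖ * ‖h - u‖ := by gcongr; exact K.le_opNorm _
  calc ‖h‖ ≤ ‖u‖ + ‖h - u‖ := norm_le_insert' _ _
    _ ≤ C * ‖K u‖ + ‖h - u‖ := by gcongr; exact hC u (truncate_mem_supportedIn J h)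
    _ ≤ C * (‖K h‖ + ‖K‖ * ‖h - u‖) + ‖h - u‖ := by gcongr
    _ = C * ‖K h‖ + (C * ‖K‖ + 1) * ‖h - u‖ := by ring

theorem inL1.summable_abs {x : ltwo} (hx : inL1 x) : Summable fun i => |x i| := by
  simpa using (memℓp_gen_iff (p := 1) (by norm_num)).mp hx

theorem inL1_of_finite {x : ltwo} (hx : {i | x i ≠ 0}.Finite) : inL1 x :=
  (memℓp_zero hx).of_exponent_ge zero_le

theorem ltwo.inner_eq_tsum (x y : ltwo) : inner ℝ x y = ∑' i, x i * y i := by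
  simp [lp.inner_eq_tsum, mul_comm]

theorem ltwo.summable_mul (x y : ltwo) : Summable fun i => x i * y i := by
  simpa [mul_comm] using lp.summable_inner (𝕜 := ℝ) x y

def l1Bregman (ξ : ℕ → ℝ) (x xdag : ltwo) : ℝ :=
  ∑' i, (|x i| - |xdag i| - ξ i * (x i - xdag i))

theorem summable_mul_sub {x xdag : ltwo} (hx : inL1 x) (hxdag : inL1 xdag) {ξ : ℕ → ℝ}
    (hξ : ∀ i, |ξ i| ≤ 1) : Summable fun i => ξ i * (x i - xdag i) :=
  (hx.summable_abs.add hxdag.summable_abs).of_norm_bounded fun i => by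
    rw [Real.norm_eq_abs, abs_mul]
    exact (mul_le_of_le_one_left (abs_nonneg _) (hξ i)).trans (abs_sub _ _)

theorem Rfun_sub_Rfun_eq {H : Type*} [NormedAddCommGroup H] [InnerProductSpace ℝ H]
    [CompleteSpace H] (K : ltwo →L[ℝ] H) {x xdag : ltwo} (hx : inL1 x) (hxdag : inL1 xdag)
    (η : ℝ) (w : H) {ξ : ℕ → ℝ} (hξ : ∀ i, |ξ i| ≤ 1)
    (hsource : ∀ i, (ContinuousLinearMap.adjoint K w) i = xdag i + η * ξ i) :
    Rfun η x - Rfun η xdag =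
      η * l1Bregman ξ x xdag + inner ℝ w (K (x - xdag)) + (1 / 2) * ‖x - xdag‖ ^ 2 := by
  set h := x - xdag
  have hξh := summable_mul_sub hx hxdag hξ
  have hbreg : l1Bregman ξ x xdag = l1norm x - l1norm xdag - ∑' i, ξ i * (x i - xdag i) := by
    rw [l1Bregman, l1norm, l1norm, (hx.summable_abs.sub hxdag.summable_abs).tsum_sub hξh,
      hx.summable_abs.tsum_sub hxdag.summable_abs]
  have hinner : inner ℝ xdag h = inner ℝ w (K h) - η * ∑' i, ξ i * (x i - xdag i) := by
    rw [← ContinuousLinearMap.adjoint_inner_left, ltwo.inner_eq_tsum, ltwo.inner_eq_tsum,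
      ← tsum_mul_left, ← (ltwo.summable_mul _ h).tsum_sub (hξh.mul_left η)]
    congr 1 with i
    rw [hsource i]
    simp only [h, AddSubgroupClass.coe_sub, PreLp.sub_apply]
    ring
  have hnorm : ‖x‖ ^ 2 = ‖xdag‖ ^ 2 + 2 * inner ℝ xdag h + ‖h‖ ^ 2 := by
    rw [← norm_add_sq_real, add_sub_cancel]
  rw [Rfun, Rfun, hbreg, hnorm, hinner]
  ring

theorem norm_sub_truncate_le_two_mul_l1Bregman {x xdag : ltwo} (hx : inL1 x) (hxdag : inL1 xdag)
    {ξ : ℕ → ℝ} (hξ : ∀ i, |ξ i| ≤ 1) (hξxdag : ∀ i, ξ i * xdag i = |xdag i|) {J : Finset ℕ}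
    (hJ : ∀ i ∉ J, xdag i = 0 ∧ |ξ i| ≤ 1 / 2) :
    ‖x - xdag - truncate J (x - xdag)‖ ≤ 2 * l1Bregman ξ x xdag := by
  set v := x - xdag - truncate J (x - xdag)
  have hv : ∀ i, v i = (↑J : Set ℕ)ᶜ.indicator (fun i => x i - xdag i) i :=
    sub_truncate_apply J (x - xdag)
  have hvs : ∀ i, ‖v i‖ ≤ 2 * (|x i| - |xdag i| - ξ i * (x i - xdag i)) := fun i => by
    have hslack := Real.abs_sub_abs_sub_mul_sub_nonneg (a := x i) (hξ i) (hξxdag i)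
    by_cases hi : i ∈ J
    · rw [hv, Set.indicator_of_notMem (by simpa using hi), norm_zero]
      linarith
    · obtain ⟨hxdag0, hξhalf⟩ := hJ i hi
      have : ξ i * x i ≤ |x i| / 2 := (le_abs_self _).trans <| by
        rw [abs_mul]; linarith [mul_le_mul_of_nonneg_right hξhalf (abs_nonneg (x i))]
      rw [hv, Set.indicator_of_mem (by simpa using hi), hxdag0, Real.norm_eq_abs]
      simp only [sub_zero, abs_zero]
      linarith
  have hvsum : Summable fun i => ‖v i‖ :=
    (hx.summable_abs.add hxdag.summable_abs).of_nonneg_of_le (fun _ => norm_nonneg _) fun i => by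
      rw [hv]
      exact norm_indicator_le_norm_self _ _ |>.trans (abs_sub _ _)
  calc ‖v‖ ≤ ∑' i, ‖v i‖ := lp.norm_le_tsum_norm (by norm_num) v hvsum
    _ ≤ ∑' i, 2 * (|x i| - |xdag i| - ξ i * (x i - xdag i)) :=
      hvsum.tsum_le_tsum hvs <|
        ((hx.summable_abs.sub hxdag.summable_abs).sub (summable_mul_sub hx hxdag hξ)).mul_left 2
    _ = 2 * l1Bregman ξ x xdag := tsum_mul_left

theorem exists_finset_eq_zero_and_abs_le_half {xdag : ltwo} (hsparse : {i : ℕ | xdag i ≠ 0}.Finite)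
    {η : ℝ} (hη : 0 < η) (g : ltwo) {ξ : ℕ → ℝ} (hg : ∀ i, g i = xdag i + η * ξ i) :
    ∃ J : Finset ℕ, ∀ i ∉ J, xdag i = 0 ∧ |ξ i| ≤ 1 / 2 := by
  have hlarge := lp.finite_setOf_le_norm (p := 2) (by norm_num) g (half_pos hη)
  refine ⟨hsparse.toFinset ∪ hlarge.toFinset, fun i hi => ?_⟩
  simp only [Finset.mem_union, Set.Finite.mem_toFinset, Set.mem_ofPred_eq, not_or, not_not,
    not_le] at hi
  obtain ⟨hxdag0, hgi⟩ := hi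
  refine ⟨hxdag0, ?_⟩
  rw [hg, hxdag0, zero_add, Real.norm_eq_abs, abs_mul, abs_of_pos hη] at hgi
  nlinarith

/-- If the sparse `x†` satisfies the source condition `K*w = x† + ηξ` with
`ξ ∈ ∂‖·‖₁(x†)` and `K` has the finite basis injectivity property, then
`R_η(x) − R_η(x†) ≥ c₁‖x − x†‖₂ − c₂‖K(x − x†)‖` for some constants `c₁, c₂ > 0`. -/
theorem Rfunctional_lower_bound_sparse_source_condition
    {H : Type*} [NormedAddCommGroup H] [InnerProductSpace ℝ H] [CompleteSpace H]
    (K : ltwo →L[ℝ] H) (hFBI : FBI K)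
    (xdag : ltwo) (hsparse : {i : ℕ | xdag i ≠ 0}.Finite)
    (η : ℝ) (hη : 0 < η) (w : H) (ξ : ℕ → ℝ)
    (hξ1 : ∀ i, xdag i ≠ 0 → ξ i = Real.sign (xdag i))
    (hξ2 : ∀ i, |ξ i| ≤ 1)
    (hsource : ∀ i, (ContinuousLinearMap.adjoint K w) i = xdag i + η * ξ i) :
    ∃ c₁ > (0 : ℝ), ∃ c₂ > (0 : ℝ), ∀ x : ltwo, inL1 x →
      c₁ * ‖x - xdag‖ - c₂ * ‖K (x - xdag)‖ ≤ Rfun η x - Rfun η xdag := by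
  obtain ⟨J, hJ⟩ := exists_finset_eq_zero_and_abs_le_half hsparse hη _ hsource
  obtain ⟨C, hC0, hC⟩ := hFBI.exists_norm_le J
  set c₁ := η / 2 / (C * ‖K‖ + 1)
  have hc₁ : c₁ * (C * ‖K‖ + 1) = η / 2 := div_mul_cancel₀ _ (by positivity)
  refine ⟨c₁, by positivity, c₁ * C + ‖w‖ + 1, by positivity, fun x hx => ?_⟩
  have hxdag := inL1_of_finite hsparse
  set h := x - xdag
  set v := h - truncate J h
  have hv_breg : ‖v‖ ≤ 2 * l1Bregman ξ x xdag := norm_sub_truncate_le_two_mul_l1Bregman hx hxdag hξ2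
    (fun i => Real.mul_eq_abs_of_sign (hξ1 i)) hJ
  have hw : -(‖w‖ * ‖K h‖) ≤ inner ℝ w (K h) := neg_le_of_abs_le (abs_real_inner_le_norm _ _)
  have hh_fbi : c₁ * ‖h‖ ≤ c₁ * C * ‖K h‖ + η / 2 * ‖v‖ := by
    calc c₁ * ‖h‖ ≤ c₁ * (C * ‖K h‖ + (C * ‖K‖ + 1) * ‖v‖) := by gcongr; exact hC h
      _ = c₁ * C * ‖K h‖ + η / 2 * ‖v‖ := by rw [← hc₁]; ring
  have hη_breg : η / 2 * ‖v‖ ≤ η * l1Bregman ξ x xdag := by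
    calc η / 2 * ‖v‖ ≤ η / 2 * (2 * l1Bregman ξ x xdag) := by gcongr
      _ = η * l1Bregman ξ x xdag := by ring
  rw [Rfun_sub_Rfun_eq K hx hxdag η w hξ2 hsource]
  linarith [norm_nonneg (K h), sq_nonneg ‖h‖]
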